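/- With the hypotheses and definitions of the previous iteration scheme, the pointwise limit φ(t) = lim_{n→∞} φ_n(t) exists for each t ∈ [T₁,T], satisfies the integral equation φ(t) = M ∫ₜᵀ ρ(s, φ(s)) ds on [T₁,T] (by monotone convergence and the continuity of the concave function ρ(s,·)), and therefore φ ≡ 0 on [T₁,T] by the uniqueness assumption on the ODE u' = −Mρ(t,u), u(T)=0. -/

import Mathlib

open Set intervalIntegral Filter MeasureTheory Topology

/-! The iterates decrease to a limit `ψ ≥ 0`, and monotone convergence gives `ψ t = M ∫ₜᵀ g`
with `g s = lim ρ(s, φₙ s) ≥ ρ(s, ψ s) ≥ 0`. Where `ψ s > 0`, continuity of the concave function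
`ρ(s,·)` on `(0, ∞)` gives `g s = ρ(s, ψ s)`. Let `t₀` be the first zero of `ψ`, which exists
because `ψ` is continuous and `ψ T = 0`: before `t₀` we have `ψ > 0`, and after it `∫_{t₀}^T g = 0`
forces `g = 0 = ρ(s, ψ s)` almost everywhere. So `ψ` solves the integral equation, and
uniqueness makes it `0`. -/

theorem integrable_and_tendsto_integral_of_antitone_of_nonneg {α : Type*} [MeasurableSpace α]
    {μ : Measure α} {f : ℕ → α → ℝ} {F : α → ℝ} (hf : ∀ n, Integrable (f n) μ)
    (h_nonneg : ∀ᵐ x ∂μ, ∀ n, 0 ≤ f n x) (h_mono : ∀ᵐ x ∂μ, Antitone fun n ↦ f n x)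
    (h_tendsto : ∀ᵐ x ∂μ, Tendsto (fun n ↦ f n x) atTop (𝓝 (F x))) :
    Integrable F μ ∧ Tendsto (fun n ↦ ∫ x, f n x ∂μ) atTop (𝓝 (∫ x, F x ∂μ)) := by
  have hF : Integrable F μ := by
    refine (hf 0).mono (aestronglyMeasurable_of_tendsto_ae atTop (fun n ↦ (hf n).1) h_tendsto) ?_
    filter_upwards [h_nonneg, h_mono, h_tendsto] with x hx_nonneg hx_mono hx_tendsto
    have hF_nonneg : 0 ≤ F x := ge_of_tendsto' hx_tendsto hx_nonneg
    have hF_le : F x ≤ f 0 x := le_of_tendsto' hx_tendsto fun n ↦ hx_mono n.zero_le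
    rw [Real.norm_of_nonneg hF_nonneg, Real.norm_of_nonneg (hx_nonneg 0)]
    exact hF_le
  exact ⟨hF, integral_tendsto_of_tendsto_of_antitone hf hF h_mono h_tendsto⟩

theorem intervalIntegrable_and_tendsto_integral_of_antitone_of_nonneg {f : ℕ → ℝ → ℝ}
    {F : ℝ → ℝ} {a b : ℝ} (hab : a ≤ b) (hf : ∀ n, IntervalIntegrable (f n) volume a b)
    (h_nonneg : ∀ x ∈ Ioc a b, ∀ n, 0 ≤ f n x) (h_mono : ∀ x ∈ Ioc a b, Antitone fun n ↦ f n x)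
    (h_tendsto : ∀ x ∈ Ioc a b, Tendsto (fun n ↦ f n x) atTop (𝓝 (F x))) :
    IntervalIntegrable F volume a b ∧
      Tendsto (fun n ↦ ∫ x in a..b, f n x) atTop (𝓝 (∫ x in a..b, F x)) := by
  simp only [intervalIntegrable_iff_integrableOn_Ioc_of_le hab, integral_of_le hab] at hf ⊢
  exact integrable_and_tendsto_integral_of_antitone_of_nonneg hf
    ((ae_restrict_iff' measurableSet_Ioc).2 (ae_of_all _ h_nonneg))
    ((ae_restrict_iff' measurableSet_Ioc).2 (ae_of_all _ h_mono))
    ((ae_restrict_iff' measurableSet_Ioc).2 (ae_of_all _ h_tendsto))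

theorem ConcaveOn.tendsto_comp_of_pos {f : ℝ → ℝ} (hf : ConcaveOn ℝ (Ici 0) f) {ι : Type*}
    {l : Filter ι} {u : ι → ℝ} {x : ℝ} (hx : 0 < x) (hu : Tendsto u l (𝓝 x)) :
    Tendsto (fun i ↦ f (u i)) l (𝓝 (f x)) := by
  have hcont := hf.continuousOn_interior.continuousAt
    (by rw [interior_Ici]; exact Ioi_mem_nhds hx)
  exact hcont.tendsto.comp hu

theorem integral_eq_of_eq_where_integral_pos {g h : ℝ → ℝ} {a b : ℝ} (hab : a ≤ b)
    (hg : IntervalIntegrable g volume a b) (hh : ∀ s ∈ Icc a b, 0 ≤ h s ∧ h s ≤ g s)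
    (heq : ∀ s ∈ Icc a b, 0 < ∫ x in s..b, g x → h s = g s) :
    ∀ t ∈ Icc a b, ∫ x in t..b, h x = ∫ x in t..b, g x := by
  have hg_nonneg : ∀ s ∈ Icc a b, 0 ≤ g s := fun s hs ↦ (hh s hs).1.trans (hh s hs).2
  have hg_int : ∀ t ∈ Icc a b, IntervalIntegrable g volume t b := fun t ht ↦
    hg.mono_set (by rw [uIcc_of_le hab, uIcc_of_le ht.2]; exact Icc_subset_Icc_left ht.1)
  have hcont : ContinuousOn (fun s ↦ ∫ x in s..b, g x) (Icc a b) := by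
    simpa only [uIcc_of_le hab] using continuousOn_primitive_interval_left (a := a) (b := b)
      (by rw [uIcc_of_le hab]; exact (intervalIntegrable_iff_integrableOn_Icc_of_le hab).1 hg)
  obtain ⟨t₀, ⟨ht₀, hGt₀⟩, ht₀_min⟩ :
      ∃ t₀, IsLeast (Icc a b ∩ (fun s ↦ ∫ x in s..b, g x) ⁻¹' {0}) t₀ :=
    (isCompact_Icc.of_isClosed_subset
      (hcont.preimage_isClosed_of_isClosed isClosed_Icc isClosed_singleton)
      inter_subset_left).exists_isLeast ⟨b, right_mem_Icc.2 hab, integral_same⟩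
  have hpos : ∀ s ∈ Icc a b, s < t₀ → 0 < ∫ x in s..b, g x := by
    intro s hs hst
    refine (integral_nonneg hs.2 fun x hx ↦ hg_nonneg x ⟨hs.1.trans hx.1, hx.2⟩).lt_of_ne' ?_
    exact fun h0 ↦ (ht₀_min ⟨hs, h0⟩).not_gt hst
  have hzero : ∀ᵐ s, s ∈ Ioc t₀ b → g s = 0 := by
    have hnonneg : 0 ≤ᵐ[volume.restrict (Ioc t₀ b)] g :=
      (ae_restrict_iff' measurableSet_Ioc).2 (ae_of_all _ fun s hs ↦
        hg_nonneg s ⟨ht₀.1.trans hs.1.le, hs.2⟩)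
    have := (integral_eq_zero_iff_of_le_of_nonneg_ae ht₀.2 hnonneg (hg_int t₀ ht₀)).1 hGt₀
    rwa [EventuallyEq, ae_restrict_iff' measurableSet_Ioc] at this
  intro t ht
  refine intervalIntegral.integral_congr_ae ?_
  filter_upwards [hzero, measure_eq_zero_iff_ae_notMem.1 (measure_singleton t₀)]
    with s hs_zero hs_ne hs
  rw [uIoc_of_le ht.2] at hs
  have hs' : s ∈ Icc a b := ⟨ht.1.trans hs.1.le, hs.2⟩
  rcases lt_or_gt_of_ne hs_ne with hst | hst
  · exact heq s hs' (hpos s hs' hst)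
  · have := hs_zero ⟨hst, hs.2⟩
    linarith [hh s hs']

theorem picard_iterates_tendsto_zero_general (T T₁ M : ℝ) (hT₁ : 0 ≤ T₁) (hT : T₁ ≤ T)
    (hM : 0 < M)
    (ρ : ℝ → ℝ → ℝ)
    (hconc : ∀ t ∈ Icc (0 : ℝ) T, ConcaveOn ℝ (Ici (0 : ℝ)) (ρ t))
    (hmono : ∀ t ∈ Icc (0 : ℝ) T, MonotoneOn (ρ t) (Ici (0 : ℝ)))
    (hnonneg : ∀ t ∈ Icc (0 : ℝ) T, ∀ u, 0 ≤ u → 0 ≤ ρ t u)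
    (φ : ℕ → ℝ → ℝ)
    (hφsucc : ∀ n t, φ (n + 1) t = M * ∫ s in t..T, ρ s (φ n s))
    (hφint : ∀ n, ∀ t ∈ Icc T₁ T, IntervalIntegrable (fun s => ρ s (φ n s))
        MeasureTheory.volume t T)
    (hφnonneg : ∀ n, ∀ t ∈ Icc T₁ T, 0 ≤ φ n t)
    (hφanti : ∀ t ∈ Icc T₁ T, Antitone (fun n => φ n t))
    (huniq' : ∀ u : ℝ → ℝ, (∀ t ∈ Icc T₁ T, 0 ≤ u t) →
        (∀ t ∈ Icc T₁ T, u t = M * ∫ s in t..T, ρ s (u s)) →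
        ∀ t ∈ Icc T₁ T, u t = 0) :
    ∃ φlim : ℝ → ℝ,
      (∀ t ∈ Icc T₁ T, Tendsto (fun n => φ n t) atTop (nhds (φlim t))) ∧
      (∀ t ∈ Icc T₁ T, φlim t = M * ∫ s in t..T, ρ s (φlim s)) ∧
      (∀ t ∈ Icc T₁ T, φlim t = 0) := by
  have hI : Icc T₁ T ⊆ Icc 0 T := Icc_subset_Icc_left hT₁
  have hIoc : ∀ t ∈ Icc T₁ T, Ioc t T ⊆ Icc T₁ T := fun t ht s hs ↦ ⟨ht.1.trans hs.1.le, hs.2⟩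
  set ψ : ℝ → ℝ := fun t ↦ ⨅ n, φ n t
  set g : ℝ → ℝ := fun s ↦ ⨅ n, ρ s (φ n s)
  have hρ_nonneg : ∀ s ∈ Icc T₁ T, ∀ n, 0 ≤ ρ s (φ n s) := fun s hs n ↦
    hnonneg s (hI hs) _ (hφnonneg n s hs)
  have hρ_anti : ∀ s ∈ Icc T₁ T, Antitone fun n ↦ ρ s (φ n s) := fun s hs _ _ hmn ↦
    hmono s (hI hs) (hφnonneg _ s hs) (hφnonneg _ s hs) (hφanti s hs hmn)
  have hφ_lim : ∀ t ∈ Icc T₁ T, Tendsto (fun n ↦ φ n t) atTop (𝓝 (ψ t)) := fun t ht ↦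
    tendsto_atTop_ciInf (hφanti t ht) ⟨0, forall_mem_range.2 fun n ↦ hφnonneg n t ht⟩
  have hρ_lim : ∀ s ∈ Icc T₁ T, Tendsto (fun n ↦ ρ s (φ n s)) atTop (𝓝 (g s)) := fun s hs ↦
    tendsto_atTop_ciInf (hρ_anti s hs) ⟨0, forall_mem_range.2 (hρ_nonneg s hs)⟩
  have hψ_nonneg : ∀ t ∈ Icc T₁ T, 0 ≤ ψ t := fun t ht ↦ le_ciInf fun n ↦ hφnonneg n t ht
  have hψ_le : ∀ t ∈ Icc T₁ T, ∀ n, ψ t ≤ φ n t := fun t ht ↦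
    (hφanti t ht).le_of_tendsto (hφ_lim t ht)
  have hmct : ∀ t ∈ Icc T₁ T, IntervalIntegrable g volume t T ∧
      Tendsto (fun n ↦ ∫ s in t..T, ρ s (φ n s)) atTop (𝓝 (∫ s in t..T, g s)) := fun t ht ↦
    intervalIntegrable_and_tendsto_integral_of_antitone_of_nonneg ht.2 (fun n ↦ hφint n t ht)
      (fun s hs ↦ hρ_nonneg s (hIoc t ht hs)) (fun s hs ↦ hρ_anti s (hIoc t ht hs))
      (fun s hs ↦ hρ_lim s (hIoc t ht hs))
  have hψ_eq : ∀ t ∈ Icc T₁ T, ψ t = M * ∫ s in t..T, g s := fun t ht ↦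
    tendsto_nhds_unique ((hφ_lim t ht).comp (tendsto_add_atTop_nat 1))
      (by simpa only [Function.comp_def, hφsucc] using (hmct t ht).2.const_mul M)
  have hρψ_le : ∀ s ∈ Icc T₁ T, ρ s (ψ s) ≤ g s := fun s hs ↦
    ge_of_tendsto' (hρ_lim s hs) fun n ↦
      hmono s (hI hs) (hψ_nonneg s hs) (hφnonneg n s hs) (hψ_le s hs n)
  have hρψ_eq : ∀ s ∈ Icc T₁ T, 0 < ψ s → ρ s (ψ s) = g s := fun s hs hpos ↦
    tendsto_nhds_unique ((hconc s (hI hs)).tendsto_comp_of_pos hpos (hφ_lim s hs)) (hρ_lim s hs)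
  have hρψ_int := integral_eq_of_eq_where_integral_pos hT (hmct T₁ ⟨le_rfl, hT⟩).1
    (fun s hs ↦ ⟨hnonneg s (hI hs) _ (hψ_nonneg s hs), hρψ_le s hs⟩)
    (fun s hs hpos ↦ hρψ_eq s hs (by rw [hψ_eq s hs]; positivity))
  have hψ_sol : ∀ t ∈ Icc T₁ T, ψ t = M * ∫ s in t..T, ρ s (ψ s) := fun t ht ↦ by
    rw [hψ_eq t ht, hρψ_int t ht]
  exact ⟨ψ, hφ_lim, hψ_sol, huniq' ψ hψ_nonneg hψ_sol⟩

/-- The non-increasing Picard iterates `φ_n` converge pointwise on `[T₁,T]` to a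
limit `φ` which satisfies the integral equation `φ(t) = M∫ₜᵀ ρ(s,φ(s))ds`, and
hence `φ ≡ 0` on `[T₁,T]` by the uniqueness assumption on the ODE
`u' = -Mρ(t,u), u(T) = 0`. -/
theorem picard_iterates_tendsto_zero (T T₁ M M₁ : ℝ) (hT₁ : 0 ≤ T₁) (hT : T₁ ≤ T)
    (hM : 0 < M) (hM₁ : 0 ≤ M₁)
    (ρ : ℝ → ℝ → ℝ)
    (hconc : ∀ t ∈ Icc (0 : ℝ) T, ConcaveOn ℝ (Ici (0 : ℝ)) (ρ t))
    (hmono : ∀ t ∈ Icc (0 : ℝ) T, MonotoneOn (ρ t) (Ici (0 : ℝ)))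
    (hzero : ∀ t ∈ Icc (0 : ℝ) T, ρ t 0 = 0)
    (hnonneg : ∀ t ∈ Icc (0 : ℝ) T, ∀ u, 0 ≤ u → 0 ≤ ρ t u)
    (hintu : ∀ u : ℝ, 0 ≤ u → IntervalIntegrable (fun s => ρ s u) MeasureTheory.volume 0 T)
    (huniq : ∀ u : ℝ → ℝ, (∀ t ∈ Icc (0 : ℝ) T, HasDerivAt u (-(M * ρ t (u t))) t) →
        u T = 0 → ∀ t ∈ Icc (0 : ℝ) T, u t = 0)
    (φ : ℕ → ℝ → ℝ)
    (hφ0 : ∀ t, φ 0 t = M * ∫ s in t..T, ρ s M₁)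
    (hφsucc : ∀ n t, φ (n + 1) t = M * ∫ s in t..T, ρ s (φ n s))
    (hφint : ∀ n, ∀ t ∈ Icc T₁ T, IntervalIntegrable (fun s => ρ s (φ n s))
        MeasureTheory.volume t T)
    (hφnonneg : ∀ n, ∀ t ∈ Icc T₁ T, 0 ≤ φ n t)
    (hφanti : ∀ t ∈ Icc T₁ T, Antitone (fun n => φ n t))
    (huniq' : ∀ u : ℝ → ℝ, (∀ t ∈ Icc T₁ T, 0 ≤ u t) →
        (∀ t ∈ Icc T₁ T, u t = M * ∫ s in t..T, ρ s (u s)) →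
        ∀ t ∈ Icc T₁ T, u t = 0) :
    ∃ φlim : ℝ → ℝ,
      (∀ t ∈ Icc T₁ T, Tendsto (fun n => φ n t) atTop (nhds (φlim t))) ∧
      (∀ t ∈ Icc T₁ T, φlim t = M * ∫ s in t..T, ρ s (φlim s)) ∧
      (∀ t ∈ Icc T₁ T, φlim t = 0) :=
  picard_iterates_tendsto_zero_general T T₁ M hT₁ hT hM ρ hconc hmono hnonneg φ hφsucc hφint
    hφnonneg hφanti huniq'
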